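/- arXiv:0709.1897 — 8 statements merged into one kernel-verified Lean document; each statement's English description precedes it below -/
import Mathlib

section
/- If M and N are matrices in su(1,1) that are linearly independent over ℝ (in the space of 2×2 complex matrices regarded as a real vector space), then the three matrices M, N, and (M·N − N·M)ᴴ (the conjugate transpose of the commutator [M,N]) are linearly independent over ℝ. In particular, [M,N] ≠ 0. -/
open Matrix

/-- The metric matrix η = diag(1, -1). -/
def eta : Matrix (Fin 2) (Fin 2) ℂ := !![1, 0; 0, -1]

/-- Membership in the Lie algebra su(1,1): trace zero and Mᴴη + ηM = 0. -/
def su11 (M : Matrix (Fin 2) (Fin 2) ℂ) : Prop :=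
  M.trace = 0 ∧ Mᴴ * eta + eta * M = 0

def mk11 (a b c : ℝ) : Matrix (Fin 2) (Fin 2) ℂ :=
  !![Complex.I * a, b + Complex.I * c; b - Complex.I * c, -(Complex.I * a)]

lemma su11_decomp (M : Matrix (Fin 2) (Fin 2) ℂ) (h : su11 M) :
    ∃ a b c : ℝ, M = mk11 a b c := by
  obtain ⟨ht, he⟩ := h
  rw [Matrix.trace_fin_two, Complex.ext_iff] at ht
  simp at ht
  obtain ⟨ht1, ht2⟩ := ht
  have h00 := congr_fun (congr_fun he 0) 0
  have h01 := congr_fun (congr_fun he 0) 1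
  have h11 := congr_fun (congr_fun he 1) 1
  simp [eta, Matrix.mul_apply, Fin.sum_univ_two, Matrix.conjTranspose_apply,
    Matrix.vecMul, dotProduct, Complex.ext_iff] at h00 h01 h11
  obtain ⟨h011, h012⟩ := h01
  refine ⟨(M 0 0).im, (M 0 1).re, (M 0 1).im, ?_⟩
  ext i j
  fin_cases i <;> fin_cases j <;>
    simp [mk11, Complex.ext_iff] <;> (try constructor) <;> linarith

lemma key_real (a1 b1 c1 a2 b2 c2 : ℝ)
    (hind : ∀ s t : ℝ, s * a1 + t * a2 = 0 → s * b1 + t * b2 = 0 →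
      s * c1 + t * c2 = 0 → s = 0 ∧ t = 0)
    (x y z : ℝ)
    (h1 : x * a1 + y * a2 + 2 * z * (b1 * c2 - c1 * b2) = 0)
    (h2 : x * b1 + y * b2 + 2 * z * (a2 * c1 - a1 * c2) = 0)
    (h3 : x * c1 + y * c2 + 2 * z * (a1 * b2 - a2 * b1) = 0) :
    x = 0 ∧ y = 0 ∧ z = 0 := by
  have hz : z * ((b1 * c2 - c1 * b2) ^ 2 + (a2 * c1 - a1 * c2) ^ 2
      + (a1 * b2 - a2 * b1) ^ 2) = 0 := by
    linear_combination (b1 * c2 - c1 * b2) / 2 * h1 + (a2 * c1 - a1 * c2) / 2 * h2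
      + (a1 * b2 - a2 * b1) / 2 * h3
  have hpos : (b1 * c2 - c1 * b2) ^ 2 + (a2 * c1 - a1 * c2) ^ 2
      + (a1 * b2 - a2 * b1) ^ 2 ≠ 0 := by
    intro hsum
    have hp0 : b1 * c2 - c1 * b2 = 0 := by nlinarith [sq_nonneg (b1 * c2 - c1 * b2), sq_nonneg (a2 * c1 - a1 * c2), sq_nonneg (a1 * b2 - a2 * b1)]
    have hq0 : a2 * c1 - a1 * c2 = 0 := by nlinarith [sq_nonneg (b1 * c2 - c1 * b2), sq_nonneg (a2 * c1 - a1 * c2), sq_nonneg (a1 * b2 - a2 * b1)]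
    have hr0 : a1 * b2 - a2 * b1 = 0 := by nlinarith [sq_nonneg (b1 * c2 - c1 * b2), sq_nonneg (a2 * c1 - a1 * c2), sq_nonneg (a1 * b2 - a2 * b1)]
    have ha := hind a2 (-a1) (by ring) (by linarith) (by linarith)
    have hb := hind b2 (-b1) (by linarith) (by ring) (by linarith)
    have hc := hind c2 (-c1) (by linarith) (by linarith) (by ring)
    have h1' : a1 = 0 := by linarith [ha.2]
    have h2' : b1 = 0 := by linarith [hb.2]
    have h3' : c1 = 0 := by linarith [hc.2]
    have := hind 1 0 (by rw [h1']; ring) (by rw [h2']; ring) (by rw [h3']; ring)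
    exact one_ne_zero this.1
  have hz0 : z = 0 := by
    rcases mul_eq_zero.mp hz with h | h
    · exact h
    · exact absurd h hpos
  subst hz0
  simp at h1 h2 h3
  obtain ⟨hx, hy⟩ := hind x y h1 h2 h3
  exact ⟨hx, hy, rfl⟩

lemma main_li (a1 b1 c1 a2 b2 c2 : ℝ)
    (hMN : LinearIndependent ℝ ![mk11 a1 b1 c1, mk11 a2 b2 c2]) :
    LinearIndependent ℝ ![mk11 a1 b1 c1, mk11 a2 b2 c2,
      (mk11 a1 b1 c1 * mk11 a2 b2 c2 - mk11 a2 b2 c2 * mk11 a1 b1 c1)ᴴ] := by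
  rw [Fintype.linearIndependent_iff] at hMN ⊢
  have hind : ∀ s t : ℝ, s * a1 + t * a2 = 0 → s * b1 + t * b2 = 0 →
      s * c1 + t * c2 = 0 → s = 0 ∧ t = 0 := by
    intro s t ha hb hc
    have h := hMN ![s, t] ?_
    · exact ⟨h 0, h 1⟩
    · rw [Fin.sum_univ_two]
      ext i j
      fin_cases i <;> fin_cases j <;>
        simp [mk11, Complex.ext_iff] <;> (try constructor) <;> linarith
  intro g hg
  rw [Fin.sum_univ_three] at hg
  have e00 := congr_fun (congr_fun hg 0) 0
  have e01 := congr_fun (congr_fun hg 0) 1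
  simp [mk11, Matrix.mul_apply, Fin.sum_univ_two, Matrix.conjTranspose_apply,
    Complex.ext_iff] at e00 e01
  obtain ⟨hx, hy, hz⟩ := key_real a1 b1 c1 a2 b2 c2 hind (g 0) (g 1) (g 2)
    (by linear_combination e00.2) (by linear_combination e01.1)
    (by linear_combination e01.2)
  intro i
  fin_cases i <;> assumption

theorem stmt2 (M N : Matrix (Fin 2) (Fin 2) ℂ) (hM : su11 M) (hN : su11 N)
    (hMN : LinearIndependent ℝ ![M, N]) :
    LinearIndependent ℝ ![M, N, (M * N - N * M)ᴴ] ∧ M * N - N * M ≠ 0 := by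
  obtain ⟨a1, b1, c1, hMe⟩ := su11_decomp M hM
  obtain ⟨a2, b2, c2, hNe⟩ := su11_decomp N hN
  subst hMe hNe
  have h1 := main_li a1 b1 c1 a2 b2 c2 hMN
  refine ⟨h1, ?_⟩
  intro hC
  have h2 := h1.ne_zero 2
  simp only [Matrix.cons_val_two, Matrix.tail_cons, Matrix.head_cons] at h2
  exact h2 (by rw [hC]; simp)
end

section
/- Let M and N be matrices in su(1,1) that are linearly independent over ℝ, and suppose there exists u ∈ ℝ such that the real part of 2·Tr((M + u·N)²) is negative. Then M, N, and the commutator [M,N] = M·N − N·M are linearly independent over ℝ (hence form a basis of su(1,1)). (The condition Re(2Tr((M+uN)²)) < 0 expresses ⟨M+uN, (M+uN)†⟩ < 0 for the inner product ⟨P,Q⟩ = 2Tr(PQ†), which is real-valued on su(1,1).) -/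
open Matrix
open Complex (I)

lemma su11_form {M : Matrix (Fin 2) (Fin 2) ℂ} (h : su11 M) :
    M = !![(M 0 0).im * I, (M 0 1).re + (M 0 1).im * I;
           (M 0 1).re - (M 0 1).im * I, -((M 0 0).im * I)] := by
  obtain ⟨htr, he⟩ := h
  have h00 := congr_fun (congr_fun he 0) 0
  have h10 := congr_fun (congr_fun he 1) 0
  simp [eta, Matrix.mul_apply, Matrix.vecMul, dotProduct, Fin.sum_univ_two,
    Matrix.conjTranspose_apply, Complex.ext_iff] at h00 h10
  rw [Matrix.trace_fin_two] at htr
  rw [Complex.ext_iff] at htr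
  simp at htr
  obtain ⟨h1, h2⟩ := h10
  obtain ⟨h3, h4⟩ := htr
  ext i j
  fin_cases i <;> fin_cases j <;>
    simp [Complex.ext_iff] <;>
    first
    | (constructor <;> linarith)
    | linarith

set_option maxHeartbeats 1000000 in
theorem stmt3 (M N : Matrix (Fin 2) (Fin 2) ℂ) (hM : su11 M) (hN : su11 N)
    (hMN : LinearIndependent ℝ ![M, N])
    (hctrl : ∃ u : ℝ, (2 * ((M + u • N) * (M + u • N)).trace).re < 0) :
    LinearIndependent ℝ ![M, N, M * N - N * M] := by
  set a := (M 0 0).im with hadef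
  set b := (M 0 1).re with hbdef
  set c := (M 0 1).im with hcdef
  set a' := (N 0 0).im with ha'def
  set b' := (N 0 1).re with hb'def
  set c' := (N 0 1).im with hc'def
  have hMe : M = !![(a:ℂ) * I, b + c * I; b - c * I, -(a * I)] := su11_form hM
  have hNe : N = !![(a':ℂ) * I, b' + c' * I; b' - c' * I, -(a' * I)] := su11_form hN
  obtain ⟨u, hu⟩ := hctrl
  -- key real inequality
  have hkey : (b + u*b')^2 + (c+u*c')^2 < (a+u*a')^2 := by
    rw [hMe, hNe] at hu
    simp [Matrix.trace_fin_two, Matrix.mul_apply, Fin.sum_univ_two, Matrix.smul_apply,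
      Matrix.add_apply, Complex.ext_iff, Complex.add_re, Complex.mul_re, Complex.mul_im,
      Complex.add_im, Matrix.cons_val_zero, Matrix.cons_val_one, Matrix.head_cons] at hu
    nlinarith [hu]
  set X := a*b' - a'*b with hXdef
  set Y := a*c' - a'*c with hYdef
  set Z := b*c' - b'*c with hZdef
  have ha1 : a + u*a' ≠ 0 := by nlinarith [sq_nonneg (b+u*b'), sq_nonneg (c+u*c')]
  -- M ≠ 0
  have hM0 : M ≠ 0 := by
    have := hMN.ne_zero 0
    simpa using this
  have hq : a^2 + b^2 + c^2 > 0 := by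
    rcases lt_or_eq_of_le (by positivity : (0:ℝ) ≤ a^2+b^2+c^2) with h | h
    · exact h
    · exfalso
      apply hM0
      have ha0 : a = 0 := by nlinarith [sq_nonneg a, sq_nonneg b, sq_nonneg c, h]
      have hb0 : b = 0 := by nlinarith [sq_nonneg a, sq_nonneg b, sq_nonneg c, h]
      have hc0 : c = 0 := by nlinarith [sq_nonneg a, sq_nonneg b, sq_nonneg c, h]
      rw [hMe, ha0, hb0, hc0]
      ext i j; fin_cases i <;> fin_cases j <;> simp
  -- X² + Y² > 0
  have hXY : X^2 + Y^2 > 0 := by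
    rcases lt_or_eq_of_le (by positivity : (0:ℝ) ≤ X^2+Y^2) with h | h
    · exact h
    · exfalso
      have hX0 : X = 0 := by nlinarith [sq_nonneg X, sq_nonneg Y, h]
      have hY0 : Y = 0 := by nlinarith [sq_nonneg X, sq_nonneg Y, h]
      have hZ0 : Z = 0 := by
        have hid : (a + u*a') * Z = (b + u*b') * Y - (c + u*c') * X := by
          rw [hXdef, hYdef, hZdef]; ring
        rw [hX0, hY0] at hid
        have h2 : (a + u*a') * Z = 0 := by rw [hid]; ring
        exact (mul_eq_zero.mp h2).resolve_left ha1
      rw [hXdef] at hX0; rw [hYdef] at hY0; rw [hZdef] at hZ0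
      have hrel : (a*a' + b*b' + c*c') • M + (-(a^2 + b^2 + c^2)) • N = 0 := by
        rw [hMe, hNe]
        ext i j
        fin_cases i <;> fin_cases j <;>
          · simp [Matrix.add_apply, Matrix.smul_apply, Complex.ext_iff, Complex.real_smul,
              Complex.add_re, Complex.add_im, Complex.mul_re, Complex.mul_im,
              ← Complex.ofReal_pow]
            first
            | (constructor <;>
                first
                | linear_combination b*hX0 + c*hY0
                | linear_combination (-b)*hX0 - c*hY0
                | linear_combination (-a)*hX0 + c*hZ0
                | linear_combination a*hX0 - c*hZ0
                | linear_combination (-a)*hY0 - b*hZ0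
                | linear_combination a*hY0 + b*hZ0
                | ring)
            | linear_combination b*hX0 + c*hY0
            | linear_combination (-b)*hX0 - c*hY0
            | linear_combination (-a)*hX0 + c*hZ0
            | linear_combination a*hX0 - c*hZ0
            | linear_combination (-a)*hY0 - b*hZ0
            | linear_combination a*hY0 + b*hZ0
            | ring
      have := Fintype.linearIndependent_iff.mp hMN ![(a*a' + b*b' + c*c'), -(a^2 + b^2 + c^2)] (by
        simpa [Fin.sum_univ_two] using hrel) 1
      simp at this
      nlinarith [this, hq]
  -- determinant positive
  have hdet : X^2 + Y^2 - Z^2 > 0 := by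
    have hid : (a + u*a') * Z = (b + u*b') * Y - (c + u*c') * X := by
      rw [hXdef, hYdef, hZdef]; ring
    have hsq : ((a + u*a') * Z)^2 = ((b + u*b') * Y - (c + u*c') * X)^2 := by rw [hid]
    have hP : ((a+u*a')^2 - (b+u*b')^2 - (c+u*c')^2) * (X^2 + Y^2) > 0 :=
      mul_pos (by nlinarith [hkey]) hXY
    nlinarith [hsq, hP, sq_nonneg ((b+u*b')*X + (c+u*c')*Y), sq_nonneg (a+u*a')]
  -- main independence
  rw [Fintype.linearIndependent_iff]
  intro g hg
  set x := g 0 with hx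
  set y := g 1 with hy
  set z := g 2 with hz
  have hsum : x • M + y • N + z • (M * N - N * M) = 0 := by
    have := hg
    simpa [Fin.sum_univ_three, hx, hy, hz] using this
  rw [hMe, hNe] at hsum
  have h1 := congr_arg Complex.im (congr_fun (congr_fun hsum 0) 0)
  have h2 := congr_arg Complex.re (congr_fun (congr_fun hsum 0) 1)
  have h3 := congr_arg Complex.im (congr_fun (congr_fun hsum 0) 1)
  simp [Matrix.add_apply, Matrix.sub_apply, Matrix.smul_apply, Matrix.mul_apply,
    Fin.sum_univ_two, Complex.real_smul, Complex.add_re, Complex.add_im, Complex.sub_re,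
    Complex.sub_im, Complex.mul_re, Complex.mul_im] at h1 h2 h3
  have e1 : x*a + y*a' - 2*z*Z = 0 := by rw [hZdef]; linear_combination h1
  have e2 : x*b + y*b' - 2*z*Y = 0 := by rw [hYdef]; linear_combination h2
  have e3 : x*c + y*c' + 2*z*X = 0 := by rw [hXdef]; linear_combination h3
  have hz0 : z = 0 := by
    have hzd : z * (2*(X^2 + Y^2 - Z^2)) = 0 := by
      rw [hXdef, hYdef, hZdef] at *
      linear_combination (b*c'-b'*c) * e1 - (a*c'-a'*c) * e2 + (a*b'-a'*b) * e3
    rcases mul_eq_zero.mp hzd with h | h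
    · exact h
    · exfalso; nlinarith [hdet]
  -- now x • M + y • N = 0
  have hsum2 : x • M + y • N = 0 := by
    rw [hMe, hNe]
    have := hsum
    rw [hz0] at this
    simpa using this
  have hxy := Fintype.linearIndependent_iff.mp hMN ![x, y] (by
    simpa [Fin.sum_univ_two] using hsum2)
  intro i
  fin_cases i
  · simpa using hxy 0
  · simpa using hxy 1
  · simpa [hz] using hz0
end

section
/- Let M and N be matrices in su(1,1) that are linearly independent over ℝ, and suppose the commutator [M,N] = M·N − N·M lies in the real span of M and N. Then for every u ∈ ℝ, the real part of 2·Tr((M + u·N)²) is nonnegative. (Indeed, writing [M,N] = λ₁M + λ₂N with λ₁, λ₂ ∈ ℝ, one has λ₁² = 2Tr(N²), λ₁λ₂ = −2Tr(MN), λ₂² = 2Tr(M²), so 2Tr((M+uN)²) = (λ₂ − λ₁u)² ≥ 0.) -/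
open Matrix

lemma key_id (X Y : Matrix (Fin 2) (Fin 2) ℂ) (hX : X.trace = 0) (hY : Y.trace = 0) :
    X*(X*Y - Y*X) - (X*Y - Y*X)*X = (2*(X*X).trace) • Y - (2*(X*Y).trace) • X := by
  rw [Matrix.trace_fin_two] at hX hY
  have hX' : X 1 1 = -X 0 0 := by linear_combination hX
  have hY' : Y 1 1 = -Y 0 0 := by linear_combination hY
  ext i j
  fin_cases i <;> fin_cases j <;>
    simp [Matrix.mul_apply, Fin.sum_univ_two, Matrix.trace_fin_two, Matrix.smul_apply,
      Matrix.sub_apply, hX', hY'] <;> ring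

lemma su11_entries {M : Matrix (Fin 2) (Fin 2) ℂ} (hM : su11 M) :
    (starRingEnd ℂ) (M 0 0) = -(M 0 0) ∧ M 1 1 = -(M 0 0) ∧
      M 0 1 = (starRingEnd ℂ) (M 1 0) := by
  obtain ⟨ht, he⟩ := hM
  rw [Matrix.trace_fin_two] at ht
  have h00 := congrFun (congrFun he 0) 0
  have h01 := congrFun (congrFun he 0) 1
  simp [eta, Matrix.mul_apply, Fin.sum_univ_two, Matrix.conjTranspose_apply,
    Matrix.vecMul, dotProduct] at h00 h01
  refine ⟨by linear_combination h00, by linear_combination ht, by linear_combination h01⟩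

lemma tr_real {M N : Matrix (Fin 2) (Fin 2) ℂ} (hM : su11 M) (hN : su11 N) :
    ((M*N).trace).im = 0 := by
  obtain ⟨hM1, hM2, hM3⟩ := su11_entries hM
  obtain ⟨hN1, hN2, hN3⟩ := su11_entries hN
  rw [← Complex.conj_eq_iff_im]
  simp only [Matrix.trace_fin_two, Matrix.mul_apply, Fin.sum_univ_two, map_add, _root_.map_mul]
  rw [hM1, hN1, hM3, hN3, hM2, hN2]
  simp only [map_neg, hM1, hN1, Complex.conj_conj]
  ring

lemma real_coe_smul (r : ℝ) (X : Matrix (Fin 2) (Fin 2) ℂ) :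
    ((r : ℂ)) • X = r • X := by
  rw [show ((r:ℂ)) = algebraMap ℝ ℂ r from rfl, algebraMap_smul]

theorem stmt4 (M N : Matrix (Fin 2) (Fin 2) ℂ) (hM : su11 M) (hN : su11 N)
    (hMN : LinearIndependent ℝ ![M, N])
    (hspan : M * N - N * M ∈ Submodule.span ℝ ({M, N} : Set (Matrix (Fin 2) (Fin 2) ℂ))) :
    ∀ u : ℝ, 0 ≤ (2 * ((M + u • N) * (M + u • N)).trace).re := by
  obtain ⟨a, b, hab⟩ := Submodule.mem_span_pair.mp hspan
  rw [LinearIndependent.pair_iff] at hMN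
  -- real values of traces
  set tMM : ℝ := (2*(M*M).trace).re with htMM
  set tMN : ℝ := (2*(M*N).trace).re with htMN
  set tNN : ℝ := (2*(N*N).trace).re with htNN
  have hMMc : 2*(M*M).trace = (tMM : ℂ) := by
    have := tr_real hM hM
    apply Complex.ext <;> simp [htMM, this]
  have hMNc : 2*(M*N).trace = (tMN : ℂ) := by
    have := tr_real hM hN
    apply Complex.ext <;> simp [htMN, this]
  have hNNc : 2*(N*N).trace = (tNN : ℂ) := by
    have := tr_real hN hN
    apply Complex.ext <;> simp [htNN, this]
  -- first bracket identity
  have k1 := key_id M N hM.1 hN.1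
  rw [hMMc, hMNc, real_coe_smul, real_coe_smul] at k1
  have k1' : M * (M*N - N*M) - (M*N - N*M) * M = (b*a) • M + (b*b) • N := by
    have step : M * (M*N - N*M) - (M*N - N*M) * M = b • (M*N - N*M) := by
      conv_lhs => rw [← hab]
      simp only [mul_add, add_mul, mul_smul_comm, smul_mul_assoc]
      module
    rw [step, ← hab, smul_add, smul_smul, smul_smul]
  rw [k1'] at k1
  have e1 : (b*a + tMN) • M + (b*b - tMM) • N = 0 := by
    rw [add_smul, sub_smul]
    linear_combination (norm := module) k1
  obtain ⟨e1a, e1b⟩ := hMN _ _ e1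
  -- second bracket identity
  have k2 := key_id N M hN.1 hM.1
  rw [hNNc, Matrix.trace_mul_comm, hMNc, real_coe_smul, real_coe_smul] at k2
  have k2' : N * (N*M - M*N) - (N*M - M*N) * N = (a*a) • M + (a*b) • N := by
    have step : N * (N*M - M*N) - (N*M - M*N) * N = a • (M*N - N*M) := by
      have h2 : N*M - M*N = -(a • M + b • N) := by rw [hab]; abel
      conv_lhs => rw [h2]
      simp only [mul_neg, neg_mul, mul_add, add_mul, mul_smul_comm, smul_mul_assoc]
      module
    rw [step, ← hab, smul_add, smul_smul, smul_smul]
  rw [k2'] at k2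
  have e2 : (a*a - tNN) • M + (a*b + tMN) • N = 0 := by
    rw [add_smul, sub_smul]
    linear_combination (norm := module) k2
  obtain ⟨e2a, e2b⟩ := hMN _ _ e2
  -- final computation
  intro u
  have hexp : (M + u • N) * (M + u • N)
      = M*M + u • (M*N) + u • (N*M) + (u*u) • (N*N) := by
    simp only [add_mul, mul_add, smul_add, smul_mul_assoc, mul_smul_comm, smul_smul]
    abel
  rw [hexp]
  simp only [Matrix.trace_add, Matrix.trace_smul, mul_add]
  have hre : ∀ (r : ℝ) (z : ℂ), (2 * (r • z)).re = r * (2*z).re := by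
    intro r z
    simp [Complex.real_smul, Complex.mul_re]
    ring
  rw [Complex.add_re, Complex.add_re, Complex.add_re, hre, hre, hre]
  rw [Matrix.trace_mul_comm N M]
  rw [← htMM, ← htMN, ← htNN]
  have hfin : tMM + u * tMN + u * tMN + u * u * tNN = (b - u*a)^2 := by
    linear_combination (-1)*e1b + (2*u)*e1a + (-(u*u))*e2a
  rw [hfin]
  positivity
end

section
/- Let A, B, T be 2×2 complex matrices, let u : ℝ → ℝ be continuous, and let X : ℝ → M₂(ℂ) be differentiable with X(t) invertible for every t and satisfying X′(t) = (A + u(t)·B)·X(t) for all t. If Tr(T · X(t)⁻¹ · B · X(t)) = 0 for all t, then Tr(T · X(t)⁻¹ · (A·B − B·A) · X(t)) = 0 for all t. -/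
/-!
The function `t ↦ Tr (T X⁻¹ B X)` vanishes identically, so its derivative does. Differentiating
`X⁻¹` as `-X⁻¹ X' X⁻¹` gives `(X⁻¹ B X)' = X⁻¹ [B, A + u B] X = X⁻¹ [B, A] X`: the control term
drops out of the commutator, leaving `-Tr (T X⁻¹ [A, B] X) = 0`.
-/

open Matrix

-- `HasDerivAt` only sees the topology of `Matrix n n 𝕂`; the operator norm is chosen because it
-- makes matrices a complete normed algebra, where inversion is differentiable.
open scoped Matrix.Norms.Operator

section

variable {m n 𝕂 : Type*} [Fintype m] [Fintype n] [RCLike 𝕂]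

theorem hasDerivAt_matrix_iff {X : ℝ → Matrix m n 𝕂} {X' : Matrix m n 𝕂} {t : ℝ} :
    HasDerivAt X X' t ↔ ∀ i j, HasDerivAt (fun s => X s i j) (X' i j) t := by
  classical
  refine ⟨fun hX i j => ?_, fun hX => ?_⟩
  · exact (LinearMap.toContinuousLinearMap (entryLinearMap ℝ 𝕂 i j)).hasFDerivAt
      |>.comp_hasDerivAt t hX
  · have hsum : X = fun s => ∑ i, ∑ j, single i j (X s i j) :=
      funext fun s => matrix_eq_sum_single (X s)
    rw [hsum, matrix_eq_sum_single X']
    refine HasDerivAt.fun_sum fun i _ => HasDerivAt.fun_sum fun j _ => ?_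
    exact (LinearMap.toContinuousLinearMap (singleLinearMap ℝ i j)).hasFDerivAt
      |>.comp_hasDerivAt t (hX i j)

theorem HasDerivAt.matrix_trace {X : ℝ → Matrix n n 𝕂} {X' : Matrix n n 𝕂} {t : ℝ}
    (hX : HasDerivAt X X' t) : HasDerivAt (fun s => (X s).trace) X'.trace t :=
  (LinearMap.toContinuousLinearMap (traceLinearMap n ℝ 𝕂)).hasFDerivAt.comp_hasDerivAt t hX

variable [DecidableEq n]

theorem HasDerivAt.matrix_inv {X : ℝ → Matrix n n 𝕂} {X' : Matrix n n 𝕂} {t : ℝ}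
    (hX : HasDerivAt X X' t) (ht : IsUnit (X t)) :
    HasDerivAt (fun s => (X s)⁻¹) (-((X t)⁻¹ * X' * (X t)⁻¹)) t := by
  have hinverse := hasFDerivAt_ringInverse (𝕜 := ℝ) ht.unit
  rw [← Ring.inverse_unit, ht.unit_spec] at hinverse
  have hcomp := hinverse.comp_hasDerivAt t hX
  simp only [_root_.neg_apply, ContinuousLinearMap.mulLeftRight_apply] at hcomp
  simp only [nonsing_inv_eq_ringInverse]
  exact hcomp

theorem HasDerivAt.inv_mul_mul_of_hasDerivAt_mul {X : ℝ → Matrix n n 𝕂} {M : Matrix n n 𝕂}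
    {t : ℝ} (hX : HasDerivAt X (M * X t) t) (ht : IsUnit (X t)) (B : Matrix n n 𝕂) :
    HasDerivAt (fun s => (X s)⁻¹ * B * X s) ((X t)⁻¹ * (B * M - M * B) * X t) t := by
  have hXX : X t * (X t)⁻¹ = 1 := mul_nonsing_inv _ ((isUnit_iff_isUnit_det _).mp ht)
  have hproduct : (X t)⁻¹ * (B * M - M * B) * X t
      = -((X t)⁻¹ * (M * X t) * (X t)⁻¹) * B * X t + (X t)⁻¹ * B * (M * X t) :=
    calc (X t)⁻¹ * (B * M - M * B) * X t
        = (X t)⁻¹ * B * (M * X t) - (X t)⁻¹ * M * (X t * (X t)⁻¹) * B * X t := by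
          simp only [hXX, mul_one, mul_sub, sub_mul, mul_assoc]
      _ = _ := by noncomm_ring
  rw [hproduct]
  exact ((hX.matrix_inv ht).mul_const B).mul hX

end

theorem stmt5_general (A B T : Matrix (Fin 2) (Fin 2) ℂ) (u : ℝ → ℝ)
    (X : ℝ → Matrix (Fin 2) (Fin 2) ℂ)
    (hinv : ∀ t, IsUnit (X t))
    (hX : ∀ t i j, HasDerivAt (fun s => X s i j) (((A + (u t : ℂ) • B) * X t) i j) t)
    (hB : ∀ t, (T * (X t)⁻¹ * B * X t).trace = 0) :
    ∀ t, (T * (X t)⁻¹ * (A * B - B * A) * X t).trace = 0 := by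
  intro t
  have hconj := (hasDerivAt_matrix_iff.mpr (hX t)).inv_mul_mul_of_hasDerivAt_mul (hinv t) B
  have hderiv := (hconj.const_mul T).matrix_trace
  have hconst : (fun s => (T * ((X s)⁻¹ * B * X s)).trace) = fun _ => 0 :=
    funext fun s => by simpa only [mul_assoc] using hB s
  have hcomm : B * (A + (u t : ℂ) • B) - (A + (u t : ℂ) • B) * B = -(A * B - B * A) := by
    simp only [mul_add, add_mul, mul_smul_comm, smul_mul_assoc]
    abel
  rw [hconst] at hderiv
  simp only [hcomm, neg_mul, mul_neg, trace_neg] at hderiv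
  simpa only [mul_assoc, neg_eq_zero] using hderiv.unique (hasDerivAt_const t 0)

theorem stmt5 (A B T : Matrix (Fin 2) (Fin 2) ℂ) (u : ℝ → ℝ) (hu : Continuous u)
    (X : ℝ → Matrix (Fin 2) (Fin 2) ℂ)
    (hinv : ∀ t, IsUnit (X t))
    (hX : ∀ t i j, HasDerivAt (fun s => X s i j) (((A + (u t : ℂ) • B) * X t) i j) t)
    (hB : ∀ t, (T * (X t)⁻¹ * B * X t).trace = 0) :
    ∀ t, (T * (X t)⁻¹ * (A * B - B * A) * X t).trace = 0 :=
  stmt5_general A B T u X hinv hX hB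
end

section
/- (Characterization of abnormal extremals.) Let A and B be matrices in su(1,1) that are linearly independent over ℝ, and suppose there exists u₀ ∈ ℝ such that the real part of 2·Tr((A + u₀·B)²) is negative (the controllability condition). Let u : ℝ → ℝ be continuous, and let X : ℝ → M₂(ℂ) be differentiable with X(t) invertible for every t and X′(t) = (A + u(t)·B)·X(t) for all t. Suppose T ∈ su(1,1), T ≠ 0, and Tr(T · X(t)⁻¹ · B · X(t)) = 0 for all t. Then Tr(B·B) ≠ 0 and for every t, (u(t) : ℂ)·Tr(B·B) = −Tr(A·B); in particular u is the constant function u(t) = −Tr(A·B)/Tr(B·B). -/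
open Matrix

/-!
Write `ψ_M(t) = Tr(T X(t)⁻¹ M X(t))`. Since `(X⁻¹ M X)' = X⁻¹ ⁅M, D⁆ X` with `D = A + u B`,
the identity `ψ_B ≡ 0` differentiates to `ψ_⁅B, A⁆ ≡ 0`, and once more, by the `sl₂` identity for
`⁅⁅B, A⁆, D⁆`, to `(Tr(AB) + u Tr(B²)) ψ_A ≡ 0`. When the Gram determinant
`Tr(A²) Tr(B²) - Tr(AB)²` is nonzero, `A`, `B`, `⁅B, A⁆` span `sl₂(ℂ)`, on which the trace form is
nondegenerate, so `ψ_A`, `ψ_B`, `ψ_⁅B, A⁆` cannot vanish together unless `T = 0`; hence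
`Tr(AB) + u Tr(B²) ≡ 0`. On `su(1,1)` the trace form is twice a Lorentzian form of signature
`(2, 1)`, and the controllability condition puts a timelike vector in the plane of `A` and `B`,
so by reverse Cauchy–Schwarz the Gram determinant is negative; in particular `Tr(B²) ≠ 0`.

The adjugate replaces `X⁻¹` throughout: for `2 × 2` matrices it is linear in the entries, and
`adj D = -D` for traceless `D`.
-/

namespace Matrix

variable {R : Type*} [CommRing R]

theorem adjugate_eq_neg_of_trace_eq_zero {M : Matrix (Fin 2) (Fin 2) R}
    (hM : M.trace = 0) : M.adjugate = -M := by
  rw [trace_fin_two] at hM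
  ext i j
  fin_cases i <;> fin_cases j <;> simp [adjugate_fin_two] <;> linear_combination hM

def traceGram (A B : Matrix (Fin 2) (Fin 2) R) : R :=
  (A * A).trace * (B * B).trace - (A * B).trace ^ 2

theorem lie_add_smul_self_right {n : Type*} [Fintype n] (A B : Matrix n n R) (c : R) :
    ⁅B, A + c • B⁆ = ⁅B, A⁆ := by
  simp only [Ring.lie_def, Matrix.mul_add, Matrix.add_mul, mul_smul_comm, smul_mul_assoc]
  abel

theorem lie_lie_add_smul_eq_of_trace_eq_zero {A B : Matrix (Fin 2) (Fin 2) R}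
    (hA : A.trace = 0) (hB : B.trace = 0) (c : R) :
    ⁅⁅B, A⁆, A + c • B⁆ = (2 * ((A * A).trace + c * (A * B).trace)) • B
      - (2 * ((A * B).trace + c * (B * B).trace)) • A := by
  rw [trace_fin_two] at hA hB
  ext i j
  fin_cases i <;> fin_cases j <;>
    simp [Ring.lie_def, mul_apply, Fin.sum_univ_two, trace_fin_two,
      eq_neg_of_add_eq_zero_right hA, eq_neg_of_add_eq_zero_right hB] <;> ring

-- Expansion in the basis `A, B, ⁅B, A⁆`: the bracket is trace-orthogonal to `A` and `B`, and
-- `Tr(⁅B, A⁆²) = -2 traceGram A B`.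
theorem two_mul_traceGram_smul_eq {A B S : Matrix (Fin 2) (Fin 2) R}
    (hA : A.trace = 0) (hB : B.trace = 0) (hS : S.trace = 0) :
    (2 * traceGram A B) • S =
      (2 * ((B * B).trace * (S * A).trace - (A * B).trace * (S * B).trace)) • A
      + (2 * ((A * A).trace * (S * B).trace - (A * B).trace * (S * A).trace)) • B
      - (S * ⁅B, A⁆).trace • ⁅B, A⁆ := by
  rw [trace_fin_two] at hA hB hS
  ext i j
  fin_cases i <;> fin_cases j <;>
    simp [traceGram, Ring.lie_def, mul_apply, Fin.sum_univ_two, trace_fin_two,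
      eq_neg_of_add_eq_zero_right hA, eq_neg_of_add_eq_zero_right hB,
      eq_neg_of_add_eq_zero_right hS] <;> ring

theorem eq_zero_of_trace_mul_eq_zero {K : Type*} [Field K] [CharZero K]
    {A B S : Matrix (Fin 2) (Fin 2) K} (hA : A.trace = 0) (hB : B.trace = 0) (hS : S.trace = 0)
    (hG : traceGram A B ≠ 0) (hSA : (S * A).trace = 0) (hSB : (S * B).trace = 0)
    (hSC : (S * ⁅B, A⁆).trace = 0) : S = 0 := by
  have h := two_mul_traceGram_smul_eq hA hB hS
  rw [hSA, hSB, hSC] at h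
  simp only [mul_zero, sub_zero, zero_smul, add_zero] at h
  exact (smul_eq_zero.1 h).resolve_left (mul_ne_zero two_ne_zero hG)

end Matrix

section EntrywiseDeriv

variable {𝕜 𝔸 : Type*} [NontriviallyNormedField 𝕜] [NormedCommRing 𝔸] [NormedAlgebra 𝕜 𝔸]
  {l m n : Type*} [Fintype m]

def HasEntrywiseDerivAt (f : 𝕜 → Matrix l n 𝔸) (f' : Matrix l n 𝔸) (t : 𝕜) : Prop :=
  ∀ i j, HasDerivAt (fun s => f s i j) (f' i j) t

theorem hasEntrywiseDerivAt_const (M : Matrix l n 𝔸) (t : 𝕜) :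
    HasEntrywiseDerivAt (fun _ => M) 0 t :=
  fun _ _ => hasDerivAt_const t _

theorem HasEntrywiseDerivAt.mul {f : 𝕜 → Matrix l m 𝔸} {g : 𝕜 → Matrix m n 𝔸}
    {f' : Matrix l m 𝔸} {g' : Matrix m n 𝔸} {t : 𝕜}
    (hf : HasEntrywiseDerivAt f f' t) (hg : HasEntrywiseDerivAt g g' t) :
    HasEntrywiseDerivAt (fun s => f s * g s) (f' * g t + f t * g') t := by
  intro i j
  simp only [mul_apply, Matrix.add_apply, ← Finset.sum_add_distrib]
  exact HasDerivAt.fun_sum fun k _ => (hf i k).fun_mul (hg k j)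

theorem HasEntrywiseDerivAt.trace {f : 𝕜 → Matrix m m 𝔸} {f' : Matrix m m 𝔸} {t : 𝕜}
    (hf : HasEntrywiseDerivAt f f' t) : HasDerivAt (fun s => (f s).trace) f'.trace t :=
  HasDerivAt.fun_sum fun i _ => hf i i

theorem HasEntrywiseDerivAt.adjugate {f : 𝕜 → Matrix (Fin 2) (Fin 2) 𝔸}
    {f' : Matrix (Fin 2) (Fin 2) 𝔸} {t : 𝕜} (hf : HasEntrywiseDerivAt f f' t) :
    HasEntrywiseDerivAt (fun s => (f s).adjugate) f'.adjugate t := by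
  intro i j
  simp only [adjugate_fin_two]
  fin_cases i <;> fin_cases j
  exacts [hf 1 1, (hf 0 1).neg, (hf 1 0).neg, hf 0 0]

theorem hasDerivAt_trace_mul_adjugate_mul_mul {X : 𝕜 → Matrix (Fin 2) (Fin 2) 𝔸}
    {D : Matrix (Fin 2) (Fin 2) 𝔸} {t : 𝕜} (hX : HasEntrywiseDerivAt X (D * X t) t)
    (hD : D.trace = 0) (T M : Matrix (Fin 2) (Fin 2) 𝔸) :
    HasDerivAt (fun s => (T * (X s).adjugate * M * X s).trace)
      (T * (X t).adjugate * ⁅M, D⁆ * X t).trace t := by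
  have h := ((((hasEntrywiseDerivAt_const T t).mul hX.adjugate).mul
    (hasEntrywiseDerivAt_const M t)).mul hX).trace
  convert h using 2
  rw [adjugate_mul_distrib, adjugate_eq_neg_of_trace_eq_zero hD, Ring.lie_def]
  noncomm_ring

theorem trace_mul_adjugate_mul_lie_eq_zero {X D : 𝕜 → Matrix (Fin 2) (Fin 2) 𝔸}
    (hX : ∀ t, HasEntrywiseDerivAt X (D t * X t) t) (hD : ∀ t, (D t).trace = 0)
    {T M : Matrix (Fin 2) (Fin 2) 𝔸} (hM : ∀ t, (T * (X t).adjugate * M * X t).trace = 0)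
    (t : 𝕜) : (T * (X t).adjugate * ⁅M, D t⁆ * X t).trace = 0 := by
  have h := hasDerivAt_trace_mul_adjugate_mul_mul (hX t) (hD t) T M
  simp only [hM] at h
  exact ((hasDerivAt_const t 0).unique h).symm

end EntrywiseDeriv

theorem trace_mul_adjugate_mul_ne_zero {K : Type*} [Field K] [CharZero K]
    {A B T Y : Matrix (Fin 2) (Fin 2) K} (hA : A.trace = 0) (hB : B.trace = 0)
    (hT : T.trace = 0) (hT0 : T ≠ 0) (hG : traceGram A B ≠ 0) (hY : Y.det ≠ 0)
    (hTB : (T * Y.adjugate * B * Y).trace = 0) (hTC : (T * Y.adjugate * ⁅B, A⁆ * Y).trace = 0) :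
    (T * Y.adjugate * A * Y).trace ≠ 0 := by
  intro hTA
  set S := Y * T * Y.adjugate
  have htrace (M : Matrix (Fin 2) (Fin 2) K) : (S * M).trace = (T * Y.adjugate * M * Y).trace := by
    rw [trace_mul_cycle (T * Y.adjugate) M Y]; simp only [S, Matrix.mul_assoc]
  have hS : S.trace = 0 := by
    rw [trace_mul_cycle, adjugate_mul, smul_mul_assoc, one_mul, trace_smul, hT, smul_zero]
  have hS0 : S = 0 := eq_zero_of_trace_mul_eq_zero hA hB hS hG
    (by rwa [htrace]) (by rwa [htrace]) (by rwa [htrace])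
  have hconj : Y.adjugate * S * Y = (Y.det * Y.det) • T := by
    simp only [S, ← Matrix.mul_assoc, adjugate_mul, smul_mul_assoc, one_mul]
    rw [Matrix.mul_assoc, adjugate_mul, mul_smul_comm, mul_one, smul_smul]
  rw [hS0, Matrix.mul_zero, Matrix.zero_mul, eq_comm, smul_eq_zero] at hconj
  exact hT0 (hconj.resolve_left (mul_ne_zero hY hY))

theorem trace_mul_add_mul_trace_eq_zero {𝕜 K : Type*} [NontriviallyNormedField 𝕜]
    [NormedField K] [CharZero K] [NormedAlgebra 𝕜 K] {A B T : Matrix (Fin 2) (Fin 2) K}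
    (hA : A.trace = 0) (hB : B.trace = 0) (hT : T.trace = 0) (hT0 : T ≠ 0)
    (hG : traceGram A B ≠ 0) {u : 𝕜 → K} {X : 𝕜 → Matrix (Fin 2) (Fin 2) K}
    (hdet : ∀ t, (X t).det ≠ 0) (hX : ∀ t, HasEntrywiseDerivAt X ((A + u t • B) * X t) t)
    (hTB : ∀ t, (T * (X t).adjugate * B * X t).trace = 0) (t : 𝕜) :
    (A * B).trace + u t * (B * B).trace = 0 := by
  have hD (s : 𝕜) : (A + u s • B).trace = 0 := by simp [hA, hB]
  have hTC (s : 𝕜) : (T * (X s).adjugate * ⁅B, A⁆ * X s).trace = 0 := by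
    rw [← lie_add_smul_self_right A B (u s)]
    exact trace_mul_adjugate_mul_lie_eq_zero hX hD hTB s
  have h := trace_mul_adjugate_mul_lie_eq_zero hX hD hTC t
  rw [lie_lie_add_smul_eq_of_trace_eq_zero hA hB, Matrix.mul_sub, Matrix.sub_mul, trace_sub,
    mul_smul_comm, mul_smul_comm, smul_mul_assoc, smul_mul_assoc, trace_smul, trace_smul, hTB t,
    smul_eq_mul, smul_eq_mul] at h
  have hTA := trace_mul_adjugate_mul_ne_zero hA hB hT hT0 hG (hdet t) (hTB t) (hTC t)
  have : ((A * B).trace + u t * (B * B).trace) * (T * (X t).adjugate * A * X t).trace = 0 := by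
    linear_combination -h / 2
  exact (mul_eq_zero.1 this).resolve_right hTA

section Minkowski

def minkowski (v w : Fin 3 → ℝ) : ℝ := v 1 * w 1 + v 2 * w 2 - v 0 * w 0

theorem minkowski_self_pos_of_orthogonal {v w : Fin 3 → ℝ} (hv : minkowski v v < 0)
    (hvw : minkowski v w = 0) (hw : w ≠ 0) : 0 < minkowski w w := by
  simp only [minkowski] at *
  have hv0 : v 0 ≠ 0 := by
    rintro h; rw [h] at hv; nlinarith [sq_nonneg (v 1), sq_nonneg (v 2)]
  have hspatial : 0 < w 1 ^ 2 + w 2 ^ 2 := by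
    by_contra! h
    have h1 : w 1 = 0 := by nlinarith [sq_nonneg (w 1), sq_nonneg (w 2)]
    have h2 : w 2 = 0 := by nlinarith [sq_nonneg (w 1), sq_nonneg (w 2)]
    have h0 : w 0 = 0 := by
      rw [h1, h2] at hvw
      exact (mul_eq_zero.1 (by linarith : v 0 * w 0 = 0)).resolve_left hv0
    exact hw (funext fun i => by fin_cases i <;> assumption)
  -- reverse Cauchy–Schwarz
  have hCS : (v 0 * w 0) ^ 2 ≤ (w 1 ^ 2 + w 2 ^ 2) * (v 1 ^ 2 + v 2 ^ 2) := by
    rw [show v 0 * w 0 = v 1 * w 1 + v 2 * w 2 by linarith]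
    nlinarith [sq_nonneg (w 1 * v 2 - w 2 * v 1)]
  have : w 0 ^ 2 * v 0 ^ 2 < (w 1 ^ 2 + w 2 ^ 2) * v 0 ^ 2 := by
    nlinarith [mul_lt_mul_of_pos_left (by linarith : v 1 ^ 2 + v 2 ^ 2 < v 0 ^ 2) hspatial]
  nlinarith [lt_of_mul_lt_mul_right this (sq_nonneg (v 0))]

theorem minkowski_gram_neg {v w : Fin 3 → ℝ} (hvw : LinearIndependent ℝ ![v, w]) {u₀ : ℝ}
    (htime : minkowski (v + u₀ • w) (v + u₀ • w) < 0) :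
    minkowski v v * minkowski w w - minkowski v w ^ 2 < 0 := by
  set p := v + u₀ • w
  -- `w'` is orthogonal to `p`, and its square is `minkowski p p` times the Gram determinant.
  set w' := minkowski p p • w - minkowski p w • p
  have hw' : w' ≠ 0 := by
    intro h
    obtain ⟨h₁, h₂⟩ := LinearIndependent.pair_iff.1 hvw (-minkowski p w)
      (minkowski p p - u₀ * minkowski p w) (by rw [← h]; module)
    rw [neg_eq_zero.1 h₁, mul_zero, sub_zero] at h₂
    exact htime.ne h₂
  have hpw' : minkowski p w' = 0 := by
    simp only [w', minkowski, Pi.sub_apply, Pi.smul_apply, smul_eq_mul]; ring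
  have hw'w' : minkowski w' w' =
      minkowski p p * (minkowski v v * minkowski w w - minkowski v w ^ 2) := by
    simp only [w', p, minkowski, Pi.sub_apply, Pi.add_apply, Pi.smul_apply, smul_eq_mul]; ring
  have := minkowski_self_pos_of_orthogonal htime hpw' hw'
  rw [hw'w'] at this
  exact neg_of_mul_pos_right this htime.le

end Minkowski

section SU11

def su11Coords : (Fin 3 → ℝ) →ₗ[ℝ] Matrix (Fin 2) (Fin 2) ℂ where
  toFun v := !![v 0 * Complex.I, v 1 + v 2 * Complex.I; v 1 - v 2 * Complex.I, -(v 0 * Complex.I)]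
  map_add' v w := by
    ext i j; fin_cases i <;> fin_cases j <;> simp <;> ring
  map_smul' c v := by
    ext i j; fin_cases i <;> fin_cases j <;> simp <;> ring

theorem su11.exists_su11Coords_eq {M : Matrix (Fin 2) (Fin 2) ℂ} (hM : su11 M) :
    ∃ v, su11Coords v = M := by
  obtain ⟨htr, hη⟩ := hM
  have h00 : starRingEnd ℂ (M 0 0) + M 0 0 = 0 := by
    simpa [eta, mul_apply, Fin.sum_univ_two, vecMul, dotProduct] using congrFun (congrFun hη 0) 0
  have h10 : starRingEnd ℂ (M 0 1) - M 1 0 = 0 := by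
    simpa [eta, mul_apply, Fin.sum_univ_two, vecMul, dotProduct, sub_eq_add_neg] using
      congrFun (congrFun hη 1) 0
  have hre : (M 0 0).re = 0 := by simpa using congrArg Complex.re h00
  have hM10 : M 1 0 = starRingEnd ℂ (M 0 1) := by linear_combination -h10
  have hM11 : M 1 1 = -M 0 0 := by rw [trace_fin_two] at htr; linear_combination htr
  refine ⟨![(M 0 0).im, (M 0 1).re, (M 0 1).im], ?_⟩
  ext i j
  fin_cases i <;> fin_cases j <;> apply Complex.ext <;> simp [su11Coords, hre, hM10, hM11]

theorem trace_su11Coords_mul (v w : Fin 3 → ℝ) :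
    (su11Coords v * su11Coords w).trace = ((2 * minkowski v w : ℝ) : ℂ) := by
  simp only [su11Coords, LinearMap.coe_mk, AddHom.coe_mk, trace_fin_two, mul_apply,
    Fin.sum_univ_two, of_apply, cons_val', cons_val_zero, cons_val_one, cons_val_fin_one]
  push_cast [minkowski]
  linear_combination 2 * ((v 0 : ℂ) * w 0 - v 2 * w 2) * Complex.I_sq

theorem su11_traceGram_ne_zero {A B : Matrix (Fin 2) (Fin 2) ℂ} (hA : su11 A) (hB : su11 B)
    (hAB : LinearIndependent ℝ ![A, B])
    (hctrl : ∃ u₀ : ℝ, (2 * ((A + u₀ • B) * (A + u₀ • B)).trace).re < 0) :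
    traceGram A B ≠ 0 := by
  obtain ⟨v, rfl⟩ := hA.exists_su11Coords_eq
  obtain ⟨w, rfl⟩ := hB.exists_su11Coords_eq
  obtain ⟨u₀, hu₀⟩ := hctrl
  have hvw : LinearIndependent ℝ ![v, w] := by
    refine LinearIndependent.of_comp su11Coords ?_
    convert hAB using 1
    ext i; fin_cases i <;> rfl
  rw [← map_smul, ← map_add, trace_su11Coords_mul] at hu₀
  rw [← Complex.ofReal_ofNat, ← Complex.ofReal_mul, Complex.ofReal_re] at hu₀
  have htime : minkowski (v + u₀ • w) (v + u₀ • w) < 0 := by linarith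
  have hG : traceGram (su11Coords v) (su11Coords w) =
      ((4 * (minkowski v v * minkowski w w - minkowski v w ^ 2) : ℝ) : ℂ) := by
    simp only [traceGram, trace_su11Coords_mul]; push_cast; ring
  rw [hG, Complex.ofReal_ne_zero]
  linarith [minkowski_gram_neg hvw htime]

end SU11

theorem stmt6_general (A B : Matrix (Fin 2) (Fin 2) ℂ) (hA : su11 A) (hB : su11 B)
    (hAB : LinearIndependent ℝ ![A, B])
    (hctrl : ∃ u₀ : ℝ, (2 * ((A + u₀ • B) * (A + u₀ • B)).trace).re < 0)
    (u : ℝ → ℝ)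
    (X : ℝ → Matrix (Fin 2) (Fin 2) ℂ)
    (hinv : ∀ t, IsUnit (X t))
    (hX : ∀ t i j, HasDerivAt (fun s => X s i j) (((A + (u t : ℂ) • B) * X t) i j) t)
    (T : Matrix (Fin 2) (Fin 2) ℂ) (hT : su11 T) (hT0 : T ≠ 0)
    (habn : ∀ t, (T * (X t)⁻¹ * B * X t).trace = 0) :
    (B * B).trace ≠ 0 ∧ ∀ t, (u t : ℂ) * (B * B).trace = -(A * B).trace := by
  have hG := su11_traceGram_ne_zero hA hB hAB hctrl
  have hdet (t : ℝ) : (X t).det ≠ 0 := ((isUnit_iff_isUnit_det _).1 (hinv t)).ne_zero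
  have hTB (t : ℝ) : (T * (X t).adjugate * B * X t).trace = 0 := by
    have h := habn t
    rw [inv_def, Ring.inverse_eq_inv', mul_smul_comm, smul_mul_assoc, smul_mul_assoc, trace_smul,
      smul_eq_zero] at h
    exact h.resolve_left (inv_ne_zero (hdet t))
  have hrel := trace_mul_add_mul_trace_eq_zero hA.1 hB.1 hT.1 hT0 hG hdet hX hTB
  refine ⟨fun hBB => hG ?_, fun t => by linear_combination hrel t⟩
  have hAB0 : (A * B).trace = 0 := by simpa [hBB] using hrel 0
  simp [traceGram, hBB, hAB0]

theorem stmt6 (A B : Matrix (Fin 2) (Fin 2) ℂ) (hA : su11 A) (hB : su11 B)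
    (hAB : LinearIndependent ℝ ![A, B])
    (hctrl : ∃ u₀ : ℝ, (2 * ((A + u₀ • B) * (A + u₀ • B)).trace).re < 0)
    (u : ℝ → ℝ) (hu : Continuous u)
    (X : ℝ → Matrix (Fin 2) (Fin 2) ℂ)
    (hinv : ∀ t, IsUnit (X t))
    (hX : ∀ t i j, HasDerivAt (fun s => X s i j) (((A + (u t : ℂ) • B) * X t) i j) t)
    (T : Matrix (Fin 2) (Fin 2) ℂ) (hT : su11 T) (hT0 : T ≠ 0)
    (habn : ∀ t, (T * (X t)⁻¹ * B * X t).trace = 0) :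
    (B * B).trace ≠ 0 ∧ ∀ t, (u t : ℂ) * (B * B).trace = -(A * B).trace :=
  stmt6_general A B hA hB hAB hctrl u X hinv hX T hT hT0 habn
end

section
/- (Conserved quantities along normal extremals.) Let α, β, γ ∈ ℝ and let u_A, u_B, u_C : ℝ → ℝ be differentiable functions satisfying u_A′ = u_B·u_C, u_B′ = −u_C, and u_C′ = α·u_A − β·u_B + γ·u_A·u_B − α·u_B². Then the functions t ↦ u_A(t) + (1/2)·u_B(t)² and t ↦ (γ/2)·u_A(t)² − α·u_A(t)·u_B(t) − (1/2)·u_C(t)² − β·u_A(t) are constant on ℝ. -/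
/-!
Both quantities are first integrals of the system: differentiating them along a solution and
substituting the three equations, all terms cancel, so their derivative vanishes identically
and, by the mean value theorem, they are constant on `ℝ`.
-/

theorem eq_of_forall_hasDerivAt_zero {𝕜 G : Type*} [RCLike 𝕜] [NormedAddCommGroup G]
    [NormedSpace 𝕜 G] {f : 𝕜 → G} (hf : ∀ x, HasDerivAt f 0 x) (s t : 𝕜) : f s = f t :=
  is_const_of_deriv_eq_zero (fun x ↦ (hf x).differentiableAt) (fun x ↦ (hf x).deriv) s t

noncomputable section

def firstIntegral₁ (uA uB : ℝ → ℝ) (t : ℝ) : ℝ :=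
  uA t + (1 / 2) * (uB t) ^ 2

def firstIntegral₂ (α β γ : ℝ) (uA uB uC : ℝ → ℝ) (t : ℝ) : ℝ :=
  (γ / 2) * (uA t) ^ 2 - α * uA t * uB t - (1 / 2) * (uC t) ^ 2 - β * uA t

end

section

variable {α β γ : ℝ} {uA uB uC : ℝ → ℝ}

theorem hasDerivAt_firstIntegral₁ (hA : ∀ t, HasDerivAt uA (uB t * uC t) t)
    (hB : ∀ t, HasDerivAt uB (-uC t) t) (t : ℝ) :
    HasDerivAt (firstIntegral₁ uA uB) 0 t := by
  have h := (hA t).add (((hB t).fun_pow 2).const_mul (1 / 2 : ℝ))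
  exact h.congr_deriv (by ring)

theorem hasDerivAt_firstIntegral₂ (hA : ∀ t, HasDerivAt uA (uB t * uC t) t)
    (hB : ∀ t, HasDerivAt uB (-uC t) t)
    (hC : ∀ t, HasDerivAt uC (α * uA t - β * uB t + γ * uA t * uB t - α * (uB t) ^ 2) t)
    (t : ℝ) : HasDerivAt (firstIntegral₂ α β γ uA uB uC) 0 t := by
  have h := (((((hA t).fun_pow 2).const_mul (γ / 2)).sub (((hA t).const_mul α).fun_mul (hB t))).sub
    (((hC t).fun_pow 2).const_mul (1 / 2 : ℝ))).sub ((hA t).const_mul β)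
  exact h.congr_deriv (by ring)

end

theorem stmt8 (α β γ : ℝ) (uA uB uC : ℝ → ℝ)
    (hA : ∀ t, HasDerivAt uA (uB t * uC t) t)
    (hB : ∀ t, HasDerivAt uB (-uC t) t)
    (hC : ∀ t, HasDerivAt uC
      (α * uA t - β * uB t + γ * uA t * uB t - α * (uB t) ^ 2) t) :
    (∀ s t : ℝ, uA s + (1 / 2) * (uB s) ^ 2 = uA t + (1 / 2) * (uB t) ^ 2) ∧
    (∀ s t : ℝ,
      (γ / 2) * (uA s) ^ 2 - α * uA s * uB s - (1 / 2) * (uC s) ^ 2 - β * uA s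
        = (γ / 2) * (uA t) ^ 2 - α * uA t * uB t - (1 / 2) * (uC t) ^ 2 - β * uA t) :=
  ⟨eq_of_forall_hasDerivAt_zero (hasDerivAt_firstIntegral₁ hA hB),
    eq_of_forall_hasDerivAt_zero (hasDerivAt_firstIntegral₂ hA hB hC)⟩
end

section
/- (Reduction to Weierstrass form, case α = 0, γ ≠ 0.) Let β, γ, c₁, c₂ ∈ ℝ and suppose u : ℝ → ℝ is differentiable and satisfies (u′(t))² = (γ/4)·u(t)⁴ + (β − γc₁)·u(t)² + γc₁² − 2βc₁ − 2c₂ for all t. Then the function x(t) := (γ/4)·u(t)² + (β − γc₁)/3 satisfies (x′(t))² = 4·x(t)³ − g₂·x(t) − g₃ for all t, where g₂ = (1/3)·[(β − γc₁)² + 3(β² + 2γc₂)] and g₃ = (1/27)·(β − γc₁)·[(β − γc₁)² − 9(β² + 2γc₂)]. -/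
/-! With `w = a u²` the quartic equation `u'² = a u⁴ + b u² + c` becomes the cubic
`w'² = 4 a u² u'² = 4 w (w² + b w + a c)`; the shift `x = w + b / 3` removes the quadratic
term and puts it in Weierstrass form `x'² = 4 x³ - g₂ x - g₃`. -/

lemma deriv_const_mul_sq_add_const {u : ℝ → ℝ} {t : ℝ} (a b : ℝ) (hu : DifferentiableAt ℝ u t) :
    deriv (fun s => a * u s ^ 2 + b) t = 2 * a * u t * deriv u t := by
  rw [(((hu.hasDerivAt.fun_pow 2).const_mul a).add_const b).deriv]
  ring

lemma deriv_sq_eq_weierstrass_of_deriv_sq_eq_quartic {u : ℝ → ℝ} {t a b c : ℝ}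
    (hu : DifferentiableAt ℝ u t) (hode : deriv u t ^ 2 = a * u t ^ 4 + b * u t ^ 2 + c) :
    deriv (fun s => a * u s ^ 2 + b / 3) t ^ 2
      = 4 * (a * u t ^ 2 + b / 3) ^ 3 - (4 * b ^ 2 / 3 - 4 * a * c) * (a * u t ^ 2 + b / 3)
        - (4 * a * b * c / 3 - 8 * b ^ 3 / 27) := by
  rw [deriv_const_mul_sq_add_const a (b / 3) hu]
  linear_combination 4 * a ^ 2 * u t ^ 2 * hode

theorem stmt10 (β γ c₁ c₂ : ℝ) (u : ℝ → ℝ) (hu : Differentiable ℝ u)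
    (hode : ∀ t : ℝ, (deriv u t) ^ 2
      = (γ / 4) * (u t) ^ 4 + (β - γ * c₁) * (u t) ^ 2 + γ * c₁ ^ 2 - 2 * β * c₁ - 2 * c₂) :
    ∀ t : ℝ,
      (deriv (fun s => (γ / 4) * (u s) ^ 2 + (β - γ * c₁) / 3) t) ^ 2
        = 4 * ((γ / 4) * (u t) ^ 2 + (β - γ * c₁) / 3) ^ 3
          - ((1 / 3) * ((β - γ * c₁) ^ 2 + 3 * (β ^ 2 + 2 * γ * c₂)))
              * ((γ / 4) * (u t) ^ 2 + (β - γ * c₁) / 3)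
          - (1 / 27) * (β - γ * c₁) * ((β - γ * c₁) ^ 2 - 9 * (β ^ 2 + 2 * γ * c₂)) := by
  intro t
  have hquartic : deriv u t ^ 2
      = γ / 4 * u t ^ 4 + (β - γ * c₁) * u t ^ 2 + (γ * c₁ ^ 2 - 2 * β * c₁ - 2 * c₂) := by
    linear_combination hode t
  rw [deriv_sq_eq_weierstrass_of_deriv_sq_eq_quartic (hu t) hquartic]
  ring
end

section
/- (Extremal when the quartic has a 3-fold zero.) Let γ ≠ 0 and x₁, x₄, a ∈ ℝ with x₁ ≠ x₄. Then the function u(t) = x₁ + 4γ(x₁ − x₄)/(γ²(x₁ − x₄)²·(a + t/2)² − 4γ) satisfies (u′(t))² = (γ/4)·(u(t) − x₁)³·(u(t) − x₄) at every t with γ²(x₁ − x₄)²·(a + t/2)² − 4γ ≠ 0. -/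
theorem hasDerivAt_const_add_div_sq_shift_sub (x₀ k q r a t : ℝ)
    (ht : q * (a + t / 2) ^ 2 - r ≠ 0) :
    HasDerivAt (fun s => x₀ + k / (q * (a + s / 2) ^ 2 - r))
      (-(k * (q * (a + t / 2))) / (q * (a + t / 2) ^ 2 - r) ^ 2) t := by
  have hshift : HasDerivAt (fun s : ℝ => a + s / 2) (1 / 2) t :=
    ((hasDerivAt_id t).div_const 2).const_add a
  have hden : HasDerivAt (fun s : ℝ => q * (a + s / 2) ^ 2 - r) (q * (a + t / 2)) t :=
    (((hshift.pow 2).const_mul q).sub_const r).congr_deriv (by push_cast; ring)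
  simpa using ((hasDerivAt_const t k).div hden ht).const_add x₀

theorem sq_deriv_eq_of_triple_root (γ c p : ℝ) (hD : γ ^ 2 * c ^ 2 * p ^ 2 - 4 * γ ≠ 0) :
    (-(4 * γ * c * (γ ^ 2 * c ^ 2 * p)) / (γ ^ 2 * c ^ 2 * p ^ 2 - 4 * γ) ^ 2) ^ 2 =
      γ / 4 * (4 * γ * c / (γ ^ 2 * c ^ 2 * p ^ 2 - 4 * γ)) ^ 3 *
        (c + 4 * γ * c / (γ ^ 2 * c ^ 2 * p ^ 2 - 4 * γ)) := by
  -- With `D + 4γ = γ²c²p²`, both sides equal `16 γ⁶ c⁶ p² / D⁴`.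
  generalize hDdef : γ ^ 2 * c ^ 2 * p ^ 2 - 4 * γ = D at hD ⊢
  field_simp
  linear_combination γ ^ 4 * c ^ 4 * hDdef

theorem stmt17_general (γ x₁ x₄ a : ℝ) :
    ∀ t : ℝ, γ ^ 2 * (x₁ - x₄) ^ 2 * (a + t / 2) ^ 2 - 4 * γ ≠ 0 → ∃ d : ℝ,
      HasDerivAt (fun s => x₁ +
        4 * γ * (x₁ - x₄) / (γ ^ 2 * (x₁ - x₄) ^ 2 * (a + s / 2) ^ 2 - 4 * γ)) d t ∧
      d ^ 2 = (γ / 4) *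
        ((x₁ + 4 * γ * (x₁ - x₄) / (γ ^ 2 * (x₁ - x₄) ^ 2 * (a + t / 2) ^ 2 - 4 * γ)) - x₁) ^ 3 *
        ((x₁ + 4 * γ * (x₁ - x₄) / (γ ^ 2 * (x₁ - x₄) ^ 2 * (a + t / 2) ^ 2 - 4 * γ)) - x₄) := by
  intro t ht
  refine ⟨_, hasDerivAt_const_add_div_sq_shift_sub _ _ _ _ _ _ ht, ?_⟩
  rw [add_sub_cancel_left, add_sub_right_comm]
  exact sq_deriv_eq_of_triple_root γ (x₁ - x₄) (a + t / 2) ht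

theorem stmt17 (γ x₁ x₄ a : ℝ) (hγ : γ ≠ 0) (hx : x₁ ≠ x₄) :
    ∀ t : ℝ, γ ^ 2 * (x₁ - x₄) ^ 2 * (a + t / 2) ^ 2 - 4 * γ ≠ 0 → ∃ d : ℝ,
      HasDerivAt (fun s => x₁ +
        4 * γ * (x₁ - x₄) / (γ ^ 2 * (x₁ - x₄) ^ 2 * (a + s / 2) ^ 2 - 4 * γ)) d t ∧
      d ^ 2 = (γ / 4) *
        ((x₁ + 4 * γ * (x₁ - x₄) / (γ ^ 2 * (x₁ - x₄) ^ 2 * (a + t / 2) ^ 2 - 4 * γ)) - x₁) ^ 3 *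
        ((x₁ + 4 * γ * (x₁ - x₄) / (γ ^ 2 * (x₁ - x₄) ^ 2 * (a + t / 2) ^ 2 - 4 * γ)) - x₄) :=
  stmt17_general γ x₁ x₄ a
end
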